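/- arXiv:0810.1206 — 3 statements merged into one kernel-verified Lean document; each statement's English description precedes it below -/
import Mathlib

section
/- Let q ∈ [1,∞) and p ∈ [1,∞], let B be an open, relatively compact, symmetric neighbourhood of e, and let f ∈ (L^q,L^p)(G). Then the function x ↦ (|f|^q ∗ χ_B)(x) = ∫_G |f(y)|^q χ_B(y⁻¹x) dλ(y) is continuous on G. -/
/-!
With `ν = μ.withDensity |f|^q`, the symmetry of `B` turns the function into `x ↦ ν (x • B)`, while
`‖f χ_{yB}‖_q = ν (y • B)^{1/q}`. Finiteness of the block norm therefore gives, in every set of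
positive Haar measure, some `y` with `ν (y • B) < ∞`; since `y • B` ranges over open
neighbourhoods of each point, `ν` is locally finite. Continuity then comes from continuity of
translation in Haar measure, `μ (x • B ∆ x₀ • B) → 0`, transported to `ν` by absolute continuity on
a fixed compact set containing all the translates `x • B` for `x` near `x₀`.
-/

open MeasureTheory ENNReal NNReal Set Filter Topology Pointwise

variable {G : Type*} [Group G] [TopologicalSpace G] [IsTopologicalGroup G]
  [T2Space G] [LocallyCompactSpace G] [SigmaCompactSpace G]
  [MeasurableSpace G] [BorelSpace G]

/-- The norm `_B‖f‖_{q,p}`. -/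
noncomputable def blockNorm {E : Type*} [NormedAddCommGroup E]
    (μ : Measure G) (q p : ℝ≥0∞) (B : Set G) (f : G → E) : ℝ≥0∞ :=
  if p = ∞ then essSup (fun y => eLpNorm ((y • B).indicator f) q μ) μ
  else (∫⁻ y, eLpNorm ((y • B).indicator f) q μ ^ p.toReal ∂μ) ^ (1 / p.toReal)

/-- The norm `‖f‖^π_{q,p}` associated to a partition `π`. -/
noncomputable def partNorm {E : Type*} [NormedAddCommGroup E]
    (μ : Measure G) (q p : ℝ≥0∞) (π : Set (Set G)) (f : G → E) : ℝ≥0∞ :=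
  if p = ∞ then ⨆ A ∈ π, eLpNorm (A.indicator f) q μ
  else (∑' A : π, eLpNorm ((A : Set G).indicator f) q μ ^ p.toReal) ^ (1 / p.toReal)

/-- `π` is a `U`–`V` uniform partition of `G`. -/
def IsUniformPartition (π : Set (Set G)) (U V : Set G) : Prop :=
  π.Countable ∧ (∀ A ∈ π, MeasurableSet A) ∧ π.PairwiseDisjoint id ∧
    ⋃₀ π = univ ∧ ∀ A ∈ π, ∃ x ∈ A, x • U ⊆ A ∧ A ⊆ x • V

/-- The ball `B(x,r)` for the homogeneous norm `nm`. -/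
def gball (nm : G → ℝ) (x : G) (r : ℝ) : Set G := {y | nm (x⁻¹ * y) < r}

/-- The norm `‖f‖_{q,p,α}`. -/
noncomputable def alphaNorm {E : Type*} [NormedAddCommGroup E]
    (μ : Measure G) (nm : G → ℝ) (πr : ℝ → Set (Set G))
    (q p α : ℝ≥0∞) (f : G → E) : ℝ≥0∞ :=
  ⨆ (r : ℝ) (_ : 0 < r),
    μ (gball nm 1 r) ^ (α⁻¹.toReal - q⁻¹.toReal) * partNorm μ q p (πr r) f

/-- The decreasing rearrangement `f*`. -/
noncomputable def rearr (μ : Measure G) (f : G → ℂ) (t : ℝ≥0∞) : ℝ≥0∞ :=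
  sInf {s : ℝ≥0∞ | 0 < s ∧ μ {x | s < (‖f x‖₊ : ℝ≥0∞)} ≤ t}

/-- The weak Lorentz quasinorm `‖f‖*_{α,∞}`. -/
noncomputable def weakNorm (μ : Measure G) (α : ℝ≥0∞) (f : G → ℂ) : ℝ≥0∞ :=
  ⨆ (t : ℝ≥0∞) (_ : 0 < t) (_ : t ≠ ∞), t ^ α⁻¹.toReal * rearr μ f t

open scoped symmDiff

section MeasureSpace

variable {α : Type*} [MeasurableSpace α] {μ : Measure α}

-- `F` need not be measurable, so `ae_lt_top` is not available.
theorem exists_mem_ne_top_of_lintegral_ne_top {F : α → ℝ≥0∞} (hF : ∫⁻ y, F y ∂μ ≠ ∞)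
    {U : Set α} (hU : MeasurableSet U) (hμU : μ U ≠ 0) : ∃ y ∈ U, F y ≠ ∞ := by
  by_contra! hUtop
  refine hF (top_unique ?_)
  calc ∞ = ∫⁻ _ in U, ∞ ∂μ := by rw [setLIntegral_const, ENNReal.top_mul hμU]
    _ = ∫⁻ y in U, F y ∂μ := setLIntegral_congr_fun hU fun y hy => (hUtop y hy).symm
    _ ≤ ∫⁻ y, F y ∂μ := setLIntegral_le_lintegral U F

theorem eLpNorm_indicator_eq_withDensity_rpow {E : Type*} [NormedAddCommGroup E] {q : ℝ≥0∞}
    (hq0 : q ≠ 0) (hq : q ≠ ∞) {s : Set α} (hs : MeasurableSet s) (f : α → E) :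
    eLpNorm (s.indicator f) q μ =
      μ.withDensity (fun y => ‖f y‖ₑ ^ q.toReal) s ^ (1 / q.toReal) := by
  rw [eLpNorm_indicator_eq_eLpNorm_restrict hs, eLpNorm_eq_lintegral_rpow_enorm_toReal hq0 hq,
    withDensity_apply _ hs]

theorem tendsto_withDensity_apply_nhds_zero {ι : Type*} {l : Filter ι} {g : α → ℝ≥0∞}
    {K : Set α} (hK : MeasurableSet K) (hgK : μ.withDensity g K ≠ ∞) {s : ι → Set α}
    (hs : ∀ i, MeasurableSet (s i)) (hsK : ∀ᶠ i in l, s i ⊆ K)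
    (hμs : Tendsto (fun i => μ (s i)) l (𝓝 0)) :
    Tendsto (fun i => μ.withDensity g (s i)) l (𝓝 0) := by
  have hint : ∫⁻ y, K.indicator g y ∂μ ≠ ∞ := by
    rwa [lintegral_indicator hK, ← withDensity_apply _ hK]
  refine (tendsto_setLIntegral_zero hint hμs).congr' ?_
  filter_upwards [hsK] with i hi
  rw [withDensity_apply _ (hs i)]
  exact setLIntegral_congr_fun (hs i) fun y hy => indicator_of_mem (hi hy) g

theorem tendsto_measure_of_tendsto_measure_symmDiff {ι : Type*} {l : Filter ι}
    {s : ι → Set α} {t : Set α} (hs : ∀ i, MeasurableSet (s i)) (ht : MeasurableSet t)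
    (h : Tendsto (fun i => μ (s i ∆ t)) l (𝓝 0)) :
    Tendsto (fun i => μ (s i)) l (𝓝 (μ t)) := by
  let S : ι → MeasuredSets μ := fun i => ⟨s i, hs i⟩
  let T : MeasuredSets μ := ⟨t, ht⟩
  have hST : Tendsto S l (𝓝 T) := tendsto_iff_edist_tendsto_0.mpr h
  exact MeasuredSets.continuous_measure.continuousAt.tendsto.comp hST

end MeasureSpace

section Group

variable {G : Type*} [Group G] [MeasurableSpace G]

theorem lintegral_mul_indicator_inv_mul [MeasurableInv G] [MeasurableMul G] (μ : Measure G)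
    (g : G → ℝ≥0∞) {B : Set G} (hB : MeasurableSet B) (x : G) :
    ∫⁻ y, g y * B.indicator (fun _ => 1) (y⁻¹ * x) ∂μ = μ.withDensity g (x • B⁻¹) := by
  have hxB : MeasurableSet (x • B⁻¹) := hB.inv.const_smul x
  rw [withDensity_apply _ hxB, ← lintegral_indicator hxB]
  congr 1 with y
  have hmem : y⁻¹ * x ∈ B ↔ y ∈ x • B⁻¹ := by
    rw [mem_smul_set_inv, mem_smul_set_iff_inv_smul_mem, smul_eq_mul]
  by_cases hy : y ∈ x • B⁻¹
  · rw [indicator_of_mem (hmem.mpr hy), indicator_of_mem hy, mul_one]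
  · rw [indicator_of_notMem (mt hmem.mp hy), indicator_of_notMem hy, mul_zero]

theorem exists_mem_eLpNorm_indicator_smul_ne_top_of_blockNorm_lt_top {E : Type*}
    [NormedAddCommGroup E] (μ : Measure G) {q p : ℝ≥0∞} (hp : p ≠ 0) {B : Set G} {f : G → E}
    (hfin : blockNorm μ q p B f < ∞) {U : Set G} (hU : MeasurableSet U) (hμU : μ U ≠ 0) :
    ∃ y ∈ U, eLpNorm ((y • B).indicator f) q μ ≠ ∞ := by
  rw [blockNorm] at hfin
  split_ifs at hfin with hptop
  · exact Measure.exists_mem_of_measure_ne_zero_of_ae hμU (ae_restrict_of_ae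
      ((ENNReal.ae_le_essSup _).mono fun y hy => (hy.trans_lt hfin).ne))
  · have hpr : 0 < p.toReal := ENNReal.toReal_pos hp hptop
    have hint : ∫⁻ y, eLpNorm ((y • B).indicator f) q μ ^ p.toReal ∂μ ≠ ∞ := by
      simpa [hpr] using hfin.ne
    obtain ⟨y, hyU, hy⟩ := exists_mem_ne_top_of_lintegral_ne_top hint hU hμU
    exact ⟨y, hyU, by simpa [hpr] using hy⟩

end Group

section TopologicalGroup

variable {G : Type*} [Group G] [TopologicalSpace G] [IsTopologicalGroup G] [MeasurableSpace G]
  [BorelSpace G]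

theorem isLocallyFiniteMeasure_withDensity_of_blockNorm_lt_top {E : Type*}
    [NormedAddCommGroup E] (μ : Measure G) [μ.IsHaarMeasure] {q p : ℝ≥0∞} (hq0 : q ≠ 0)
    (hq : q ≠ ∞) (hp : p ≠ 0) {B : Set G} (hBopen : IsOpen B) (hBne : B.Nonempty) {f : G → E}
    (hfin : blockNorm μ q p B f < ∞) :
    IsLocallyFiniteMeasure (μ.withDensity fun y => ‖f y‖ₑ ^ q.toReal) := by
  refine ⟨fun x => ?_⟩
  have hU : IsOpen (x • B⁻¹) := hBopen.inv.smul x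
  obtain ⟨y, hy, hyfin⟩ := exists_mem_eLpNorm_indicator_smul_ne_top_of_blockNorm_lt_top μ hp
    hfin hU.measurableSet (hU.measure_ne_zero μ hBne.inv.smul_set)
  refine ⟨y • B, (hBopen.smul y).mem_nhds (mem_smul_set_inv.mp hy), ?_⟩
  rw [eLpNorm_indicator_eq_withDensity_rpow hq0 hq (hBopen.smul y).measurableSet] at hyfin
  exact lt_top_iff_ne_top.mpr (by simpa [ENNReal.toReal_pos hq0 hq] using hyfin)

theorem tendsto_measure_smul_symmDiff_smul [LocallyCompactSpace G] (μ : Measure G)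
    [μ.IsHaarMeasure] {B : Set G} (hB : MeasurableSet B) (hBc : IsCompact (closure B)) (x₀ : G) :
    Tendsto (fun x => μ ((x • B) ∆ (x₀ • B))) (𝓝 x₀) (𝓝 0) := by
  -- `μ` need not be inner regular; it agrees with a multiple of the regular `haar` on sets with
  -- compact closure, and translation is continuous in measure for `haar`.
  let F : C(G, C(G, G)) := ContinuousMap.curry ⟨fun p => p.1⁻¹ * p.2, by fun_prop⟩
  have hF : ∀ x, F x ⁻¹' B = x • B := fun x => preimage_smul_inv x B
  have hhaar : Tendsto (fun x => Measure.haar ((x • B) ∆ (x₀ • B))) (𝓝 x₀) (𝓝 0) := by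
    simpa only [hF] using tendsto_measure_symmDiff_preimage_nhds_zero
      (F.continuous.tendsto x₀) (.of_forall fun x => measurePreserving_mul_left Measure.haar x⁻¹)
      (measurePreserving_mul_left Measure.haar x₀⁻¹) hB.nullMeasurableSet
      (hBc.measure_lt_top.trans_le' (measure_mono subset_closure)).ne
  have hμ : ∀ x : G, μ ((x • B) ∆ (x₀ • B)) =
      Measure.haarScalarFactor μ Measure.haar * Measure.haar ((x • B) ∆ (x₀ • B)) := fun x =>
    Measure.measure_isMulInvariant_eq_smul_of_isCompact_closure μ Measure.haar
      (((hBc.smul x).union (hBc.smul x₀)).closure_of_subset (symmDiff_subset_union.trans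
        (union_subset_union (smul_set_mono subset_closure) (smul_set_mono subset_closure))))
  simpa only [hμ, mul_zero] using ENNReal.Tendsto.const_mul hhaar (.inr ENNReal.coe_ne_top)

theorem continuous_withDensity_apply_smul [LocallyCompactSpace G] (μ : Measure G)
    [μ.IsHaarMeasure] (g : G → ℝ≥0∞) [IsLocallyFiniteMeasure (μ.withDensity g)] {B : Set G}
    (hB : MeasurableSet B) (hBc : IsCompact (closure B)) :
    Continuous fun x : G => μ.withDensity g (x • B) := by
  refine continuous_iff_continuousAt.mpr fun x₀ => ?_
  obtain ⟨V, hVc, hV⟩ := exists_compact_mem_nhds x₀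
  have hK : IsCompact (closure (V * closure B)) := (hVc.mul hBc).closure
  have hsub : ∀ x : G, x ∈ V → x • B ⊆ closure (V * closure B) := fun x hx =>
    (smul_set_subset_mul hx).trans ((mul_subset_mul_left subset_closure).trans subset_closure)
  refine tendsto_measure_of_tendsto_measure_symmDiff (fun x => hB.const_smul x)
    (hB.const_smul x₀) (tendsto_withDensity_apply_nhds_zero isClosed_closure.measurableSet
      (hK.measure_lt_top).ne (fun x => (hB.const_smul x).symmDiff (hB.const_smul x₀)) ?_
      (tendsto_measure_smul_symmDiff_smul μ hB hBc x₀))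
  filter_upwards [hV] with x hx
  exact symmDiff_subset_union.trans (union_subset (hsub x hx) (hsub x₀ (mem_of_mem_nhds hV)))

end TopologicalGroup

theorem statement1_general
    (μ : Measure G) [μ.IsHaarMeasure]
    (q p : ℝ≥0∞) (hq1 : 1 ≤ q) (hq : q ≠ ∞) (hp1 : 1 ≤ p)
    (B : Set G) (hBopen : IsOpen B) (hBmem : (1 : G) ∈ B)
    (hBcpt : IsCompact (closure B)) (hBsymm : B⁻¹ = B)
    (f : G → ℂ)
    (hfin : blockNorm μ q p B f < ∞) :
    Continuous fun x : G =>
      ∫⁻ y, (‖f y‖₊ : ℝ≥0∞) ^ q.toReal * B.indicator (fun _ => (1 : ℝ≥0∞)) (y⁻¹ * x) ∂μ := by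
  have hq0 : q ≠ 0 := (zero_lt_one.trans_le hq1).ne'
  have hp0 : p ≠ 0 := (zero_lt_one.trans_le hp1).ne'
  have := isLocallyFiniteMeasure_withDensity_of_blockNorm_lt_top μ hq0 hq hp0 hBopen ⟨1, hBmem⟩
    hfin
  simp only [lintegral_mul_indicator_inv_mul μ _ hBopen.measurableSet, hBsymm]
  exact continuous_withDensity_apply_smul μ _ hBopen.measurableSet hBcpt

theorem statement1
    (μ : Measure G) [μ.IsHaarMeasure]
    (q p : ℝ≥0∞) (hq1 : 1 ≤ q) (hq : q ≠ ∞) (hp1 : 1 ≤ p)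
    (B : Set G) (hBopen : IsOpen B) (hBmem : (1 : G) ∈ B)
    (hBcpt : IsCompact (closure B)) (hBsymm : B⁻¹ = B)
    (f : G → ℂ) (hf : AEStronglyMeasurable f μ)
    (hfin : blockNorm μ q p B f < ∞) :
    Continuous fun x : G =>
      ∫⁻ y, (‖f y‖₊ : ℝ≥0∞) ^ q.toReal * B.indicator (fun _ => (1 : ℝ≥0∞)) (y⁻¹ * x) ∂μ :=
  statement1_general μ q p hq1 hq hp1 B hBopen hBmem hBcpt hBsymm f hfin
end

section
/- Let p,q ∈ [1,∞]. There exist constants C₁ > 0 and C₂ > 0, depending only on γ, ρ, p and q, such that for every r > 0 and every f ∈ (L^q,L^p)(G): C₁ ‖f‖^{π_r}_{q,p} ≤ r^{−ρ/p} · _{B(e,r)}‖f‖_{q,p} ≤ C₂ ‖f‖^{π_r}_{q,p} (with r^{−ρ/p} = 1 when p = ∞). -/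
open MeasureTheory ENNReal NNReal Set Filter Topology Pointwise

variable {G : Type*} [Group G] [TopologicalSpace G] [IsTopologicalGroup G]
  [T2Space G] [LocallyCompactSpace G] [SigmaCompactSpace G]
  [MeasurableSpace G] [BorelSpace G]

/-!
Every cell `A` of `π_r` has a centre `c_A` with `c_A B(s) ⊆ A ⊆ c_A B(r/2γ)`, where
`s = r/4γ²`. Hence `A ⊆ yB(r)` whenever `y ∈ c_A B(r/2γ)`, a window `yB(r)` meets `A` only if
`y ∈ c_A B(2γr)`, and since the disjoint balls `c_A B(s)` of the cells meeting `yB(r)` all lie in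
`yB(2γr)`, a window meets at most `N = ⌈(8γ³)^ρ⌉` cells. Double counting over `y` then gives
`(r/2γ)^ρ Σ_A ‖fχ_A‖_q^p ≤ N ∫ ‖fχ_{yB(r)}‖_q^p dy ≤ N^(p-1) (2γr)^ρ Σ_A ‖fχ_A‖_q^p`,
and for `p = ∞` the same two covering facts compare the suprema directly.
-/

section Comparison

variable {X ι E : Type*} [MeasurableSpace X] [NormedAddCommGroup E] {μ : Measure X}

theorem lintegral_tsum_indicator_const [Countable ι] {S : ι → Set X}
    (hS : ∀ i, MeasurableSet (S i)) (g : ι → ℝ≥0∞) :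
    ∫⁻ y, ∑' i, (S i).indicator (fun _ => g i) y ∂μ = ∑' i, μ (S i) * g i := by
  rw [lintegral_tsum fun i => (measurable_const.indicator (hS i)).aemeasurable]
  exact tsum_congr fun i => by rw [lintegral_indicator_const (hS i), mul_comm]

theorem tsum_measure_mul_le_mul_lintegral [Countable ι] {S : ι → Set X}
    (hS : ∀ i, MeasurableSet (S i)) {g : ι → ℝ≥0∞} {h : X → ℝ≥0∞}
    (hgh : ∀ i, ∀ y ∈ S i, g i ≤ h y) {N : ℕ} (hN : ∀ y, {i | y ∈ S i}.encard ≤ N) :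
    ∑' i, μ (S i) * g i ≤ N * ∫⁻ y, h y ∂μ := by
  rw [← lintegral_tsum_indicator_const hS, ← lintegral_const_mul' _ _ (natCast_ne_top N)]
  refine lintegral_mono fun y => ?_
  calc ∑' i, (S i).indicator (fun _ => g i) y
      ≤ ∑' i, (S i).indicator (fun _ => h y) y :=
        ENNReal.tsum_le_tsum fun i => indicator_le_indicator' (hgh i y)
    _ = {i | y ∈ S i}.encard * h y := by
        rw [← ENNReal.tsum_set_const, tsum_subtype {i | y ∈ S i} (fun _ => h y)]; rfl
    _ ≤ N * h y := by
        gcongr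
        exact_mod_cast hN y

theorem eLpNorm_indicator_le_sum_of_subset_biUnion {q : ℝ≥0∞} (hq : 1 ≤ q) {f : X → E}
    (hf : AEStronglyMeasurable f μ) {A : ι → Set X} {T : Finset ι}
    (hA : ∀ i ∈ T, MeasurableSet (A i)) {s : Set X} (hs : s ⊆ ⋃ i ∈ T, A i) :
    eLpNorm (s.indicator f) q μ ≤ ∑ i ∈ T, eLpNorm ((A i).indicator f) q μ := by
  calc eLpNorm (s.indicator f) q μ
      ≤ eLpNorm (∑ i ∈ T, (A i).indicator fun x => ‖f x‖) q μ := by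
        refine eLpNorm_mono_real fun x => ?_
        rw [Finset.sum_apply]
        by_cases hx : x ∈ s
        · obtain ⟨j, hj, hxj⟩ := mem_iUnion₂.mp (hs hx)
          rw [indicator_of_mem hx]
          calc ‖f x‖ = (A j).indicator (fun x => ‖f x‖) x :=
                (indicator_of_mem hxj (fun x => ‖f x‖)).symm
            _ ≤ _ := Finset.single_le_sum
                (fun i _ => indicator_nonneg (fun _ _ => norm_nonneg _) _) hj
        · rw [indicator_of_notMem hx, norm_zero]
          exact Finset.sum_nonneg fun i _ => indicator_nonneg (fun _ _ => norm_nonneg _) _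
    _ ≤ ∑ i ∈ T, eLpNorm ((A i).indicator fun x => ‖f x‖) q μ :=
        eLpNorm_sum_le (fun i hi => hf.norm.indicator (hA i hi)) hq
    _ = ∑ i ∈ T, eLpNorm ((A i).indicator f) q μ := by
        refine Finset.sum_congr rfl fun i _ => ?_
        rw [← eLpNorm_norm ((A i).indicator f)]
        simp_rw [norm_indicator_eq_indicator_norm]

theorem exists_finset_eLpNorm_indicator_le_sum {q : ℝ≥0∞} (hq : 1 ≤ q) {f : X → E}
    (hf : AEStronglyMeasurable f μ) {A : ι → Set X} (hA : ∀ i, MeasurableSet (A i))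
    {s : Set X} (hs : s ⊆ ⋃ i, A i) {N : ℕ} (hN : {i | (A i ∩ s).Nonempty}.encard ≤ N) :
    ∃ T : Finset ι, T.card ≤ N ∧ (∀ i ∈ T, (A i ∩ s).Nonempty) ∧
      eLpNorm (s.indicator f) q μ ≤ ∑ i ∈ T, eLpNorm ((A i).indicator f) q μ := by
  have hfin := finite_of_encard_le_coe hN
  refine ⟨hfin.toFinset, ?_, fun i hi => hfin.mem_toFinset.mp hi, ?_⟩
  · rwa [← ENat.natCast_le_natCast, ← hfin.encard_eq_coe_toFinset_card]
  · refine eLpNorm_indicator_le_sum_of_subset_biUnion hq hf (fun i _ => hA i) fun x hx => ?_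
    obtain ⟨i, hi⟩ := mem_iUnion.mp (hs hx)
    exact mem_biUnion (hfin.mem_toFinset.mpr ⟨x, hi, hx⟩) hi

theorem lintegral_eLpNorm_indicator_rpow_le [Countable ι] {q : ℝ≥0∞} (hq : 1 ≤ q) {p : ℝ}
    (hp : 1 ≤ p) {f : X → E} (hf : AEStronglyMeasurable f μ) {A : ι → Set X}
    (hA : ∀ i, MeasurableSet (A i)) {W : X → Set X} (hW : ∀ y, W y ⊆ ⋃ i, A i) {N : ℕ}
    (hN : ∀ y, {i | (A i ∩ W y).Nonempty}.encard ≤ N) {O : ι → Set X}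
    (hO : ∀ i, MeasurableSet (O i)) (hAO : ∀ i y, (A i ∩ W y).Nonempty → y ∈ O i) :
    ∫⁻ y, eLpNorm ((W y).indicator f) q μ ^ p ∂μ ≤
      (N : ℝ≥0∞) ^ (p - 1) * ∑' i, μ (O i) * eLpNorm ((A i).indicator f) q μ ^ p := by
  rw [← lintegral_tsum_indicator_const hO,
    ← lintegral_const_mul' _ _ (rpow_ne_top_of_nonneg (by linarith) (natCast_ne_top N))]
  refine lintegral_mono fun y => ?_
  obtain ⟨T, hTN, hTW, hWT⟩ := exists_finset_eLpNorm_indicator_le_sum hq hf hA (hW y) (hN y)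
  calc eLpNorm ((W y).indicator f) q μ ^ p
      ≤ (∑ i ∈ T, eLpNorm ((A i).indicator f) q μ) ^ p := by gcongr
    _ ≤ (T.card : ℝ≥0∞) ^ (p - 1) * ∑ i ∈ T, eLpNorm ((A i).indicator f) q μ ^ p :=
        ENNReal.rpow_sum_le_const_mul_sum_rpow _ _ hp
    _ ≤ (N : ℝ≥0∞) ^ (p - 1) *
          ∑' i, (O i).indicator (fun _ => eLpNorm ((A i).indicator f) q μ ^ p) y := by
        gcongr
        calc ∑ i ∈ T, eLpNorm ((A i).indicator f) q μ ^ p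
            = ∑ i ∈ T, (O i).indicator (fun _ => eLpNorm ((A i).indicator f) q μ ^ p) y :=
              Finset.sum_congr rfl fun i hi => by rw [indicator_of_mem (hAO i y (hTW i hi))]
          _ ≤ _ := ENNReal.sum_le_tsum T

theorem essSup_eLpNorm_indicator_le {q : ℝ≥0∞} (hq : 1 ≤ q) {f : X → E}
    (hf : AEStronglyMeasurable f μ) {A : ι → Set X} (hA : ∀ i, MeasurableSet (A i))
    {W : X → Set X} (hW : ∀ y, W y ⊆ ⋃ i, A i) {N : ℕ}
    (hN : ∀ y, {i | (A i ∩ W y).Nonempty}.encard ≤ N) :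
    essSup (fun y => eLpNorm ((W y).indicator f) q μ) μ ≤
      N * ⨆ i, eLpNorm ((A i).indicator f) q μ := by
  refine essSup_le_of_ae_le _ (Eventually.of_forall fun y => ?_)
  obtain ⟨T, hTN, -, hWT⟩ := exists_finset_eLpNorm_indicator_le_sum hq hf hA (hW y) (hN y)
  calc eLpNorm ((W y).indicator f) q μ
      ≤ ∑ i ∈ T, eLpNorm ((A i).indicator f) q μ := hWT
    _ ≤ T.card * ⨆ i, eLpNorm ((A i).indicator f) q μ := by
        rw [← nsmul_eq_mul]
        exact Finset.sum_le_card_nsmul _ _ _ fun i _ =>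
          le_iSup (fun i => eLpNorm ((A i).indicator f) q μ) i
    _ ≤ N * ⨆ i, eLpNorm ((A i).indicator f) q μ := by gcongr

theorem le_essSup_of_forall_mem {s : Set X} (hs : μ s ≠ 0) {c : ℝ≥0∞}
    {h : X → ℝ≥0∞} (hch : ∀ y ∈ s, c ≤ h y) : c ≤ essSup h μ := by
  by_contra! hlt
  have hae : ∀ᵐ y ∂μ, h y < c := ae_lt_of_essSup_lt hlt
  exact hs (measure_mono_null (fun y hy => not_lt.mpr (hch y hy)) (ae_iff.mp hae))

theorem encard_mul_le_measure {S : ι → Set X} {s : Set ι} (hs : s.Countable)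
    (hd : s.PairwiseDisjoint S) (hm : ∀ i ∈ s, MeasurableSet (S i)) {a : ℝ≥0∞}
    (ha : ∀ i ∈ s, a ≤ μ (S i)) {K : Set X} (hK : ∀ i ∈ s, S i ⊆ K) :
    s.encard * a ≤ μ K :=
  calc s.encard * a = ∑' _ : s, a := (ENNReal.tsum_set_const s a).symm
    _ ≤ ∑' i : s, μ (S i) := ENNReal.tsum_le_tsum fun i => ha i i.2
    _ = μ (⋃ i ∈ s, S i) := (measure_biUnion hs hd hm).symm
    _ ≤ μ K := measure_mono (iUnion₂_subset hK)

end Comparison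

theorem ENNReal.rpow_one_div_bounds_of_scaled_bounds {R κ S J M : ℝ≥0∞} {N : ℕ} {P : ℝ}
    (hP : 0 < P) (hR0 : R ≠ 0) (hRtop : R ≠ ⊤) (hN : N ≠ 0)
    (hlow : R * κ⁻¹ * S ≤ N * J) (hup : J ≤ M * (κ * R * S)) :
    (N * κ)⁻¹ ^ (1 / P) * S ^ (1 / P) ≤ R⁻¹ ^ (1 / P) * J ^ (1 / P) ∧
      R⁻¹ ^ (1 / P) * J ^ (1 / P) ≤ (M * κ) ^ (1 / P) * S ^ (1 / P) := by
  have hRR : R⁻¹ * R = 1 := ENNReal.inv_mul_cancel hR0 hRtop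
  have hN0 : (N : ℝ≥0∞) ≠ 0 := by exact_mod_cast hN
  have hNN : (N : ℝ≥0∞)⁻¹ * N = 1 := ENNReal.inv_mul_cancel hN0 (natCast_ne_top N)
  have hP' : 0 ≤ 1 / P := one_div_nonneg.mpr hP.le
  simp only [← ENNReal.mul_rpow_of_nonneg _ _ hP']
  refine ⟨ENNReal.rpow_le_rpow ?_ hP', ENNReal.rpow_le_rpow ?_ hP'⟩
  · calc (N * κ)⁻¹ * S = (N : ℝ≥0∞)⁻¹ * R⁻¹ * (R * κ⁻¹ * S) := by
          rw [ENNReal.mul_inv (Or.inl hN0) (Or.inl (natCast_ne_top N)),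
            show (N : ℝ≥0∞)⁻¹ * R⁻¹ * (R * κ⁻¹ * S) = (R⁻¹ * R) * ((N : ℝ≥0∞)⁻¹ * κ⁻¹ * S)
              by ring, hRR, one_mul]
      _ ≤ (N : ℝ≥0∞)⁻¹ * R⁻¹ * (N * J) := by gcongr
      _ = R⁻¹ * J := by
          rw [show (N : ℝ≥0∞)⁻¹ * R⁻¹ * (N * J) = ((N : ℝ≥0∞)⁻¹ * N) * (R⁻¹ * J) by ring,
            hNN, one_mul]
  · calc R⁻¹ * J ≤ R⁻¹ * (M * (κ * R * S)) := by gcongr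
      _ = (R⁻¹ * R) * (M * κ * S) := by ring
      _ = M * κ * S := by rw [hRR, one_mul]

theorem ENNReal.exists_pos_coe_eq_rpow {x : ℝ≥0∞} (h0 : x ≠ 0) (htop : x ≠ ⊤) (y : ℝ) :
    ∃ C : ℝ≥0, 0 < C ∧ (C : ℝ≥0∞) = x ^ y :=
  ⟨(x ^ y).toNNReal,
    toNNReal_pos (rpow_pos (pos_iff_ne_zero.mpr h0) htop).ne' (rpow_ne_top_of_ne_zero h0 htop),
    coe_toNNReal (rpow_ne_top_of_ne_zero h0 htop)⟩

section Quasinorm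

variable {H : Type*} [Group H] {nm : H → ℝ} {γ : ℝ}

theorem mem_smul_gball {x y : H} {t : ℝ} : y ∈ x • gball nm 1 t ↔ nm (x⁻¹ * y) < t := by
  rw [mem_smul_set_iff_inv_smul_mem]
  simp [gball, smul_eq_mul]

theorem measurableSet_smul_gball [TopologicalSpace H] [ContinuousMul H] [MeasurableSpace H]
    [OpensMeasurableSpace H] (hnm : Continuous nm) (x : H) (t : ℝ) :
    MeasurableSet (x • gball nm 1 t) :=
  ((isOpen_lt (hnm.comp (continuous_const.mul continuous_id)) continuous_const).smul
    x).measurableSet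

theorem measure_smul_gball [MeasurableSpace H] [MeasurableMul H] {μ : Measure H}
    [μ.IsMulLeftInvariant] {ρ : ℝ}
    (hvol : ∀ s : ℝ, 0 < s → μ (gball nm 1 s) = ENNReal.ofReal (s ^ ρ)) (x : H) {t : ℝ}
    (ht : 0 < t) : μ (x • gball nm 1 t) = ENNReal.ofReal t ^ ρ := by
  rw [measure_smul, hvol t ht, ofReal_rpow_of_pos ht]

theorem mem_smul_gball_comm (hinv : ∀ x : H, nm x⁻¹ = nm x) {x y : H} {t : ℝ} :
    y ∈ x • gball nm 1 t ↔ x ∈ y • gball nm 1 t := by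
  rw [mem_smul_gball, mem_smul_gball, ← hinv, mul_inv_rev, inv_inv]

theorem gball_mul_gball_subset (hmul : ∀ x y : H, nm (x * y) ≤ γ * (nm x + nm y))
    (hγ : 0 < γ) (s : ℝ) : gball nm 1 s * gball nm 1 s ⊆ gball nm 1 (2 * γ * s) := by
  rintro _ ⟨u, hu, v, hv, rfl⟩
  simp only [gball, inv_one, one_mul, Set.mem_ofPred_eq] at hu hv ⊢
  calc nm (u * v) ≤ γ * (nm u + nm v) := hmul u v
    _ < γ * (s + s) := by gcongr
    _ = 2 * γ * s := by ring

theorem smul_gball_subset_of_mem (hmul : ∀ x y : H, nm (x * y) ≤ γ * (nm x + nm y))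
    (hγ : 0 < γ) {y z : H} {t : ℝ} (hz : z ∈ y • gball nm 1 t) :
    z • gball nm 1 t ⊆ y • gball nm 1 (2 * γ * t) := by
  intro a ha
  rw [mem_smul_gball] at hz ha ⊢
  calc nm (y⁻¹ * a) = nm ((y⁻¹ * z) * (z⁻¹ * a)) := by group
    _ ≤ γ * (nm (y⁻¹ * z) + nm (z⁻¹ * a)) := hmul _ _
    _ < γ * (t + t) := by gcongr
    _ = 2 * γ * t := by ring

theorem subset_smul_gball_of_mem_smul_gball (hinv : ∀ x : H, nm x⁻¹ = nm x)
    (hmul : ∀ x y : H, nm (x * y) ≤ γ * (nm x + nm y)) (hγ : 0 < γ) {A : Set H} {c y : H}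
    {t : ℝ} (hA : A ⊆ c • gball nm 1 t) (hy : y ∈ c • gball nm 1 t) :
    A ⊆ y • gball nm 1 (2 * γ * t) :=
  hA.trans (smul_gball_subset_of_mem hmul hγ ((mem_smul_gball_comm hinv).mp hy))

theorem subset_smul_gball_of_inter_nonempty (hinv : ∀ x : H, nm x⁻¹ = nm x)
    (hmul : ∀ x y : H, nm (x * y) ≤ γ * (nm x + nm y)) (hγ : 0 < γ) {A : Set H} {c y : H}
    {t : ℝ} (hA : A ⊆ c • gball nm 1 t) (hAy : (A ∩ y • gball nm 1 (2 * γ * t)).Nonempty) :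
    A ⊆ y • gball nm 1 (2 * γ * (2 * γ * t)) := by
  obtain ⟨z, hzA, hzy⟩ := hAy
  exact (subset_smul_gball_of_mem_smul_gball hinv hmul hγ hA (hA hzA)).trans
    (smul_gball_subset_of_mem hmul hγ hzy)

end Quasinorm

namespace IsUniformPartition

variable {H : Type*} [Group H] [MeasurableSpace H] {π : Set (Set H)}

section Center

variable {U V : Set H}

open Classical in
noncomputable def center (hπ : IsUniformPartition π U V) (A : Set H) : H :=
  if hA : A ∈ π then (hπ.2.2.2.2 A hA).choose else 1

theorem center_mem (hπ : IsUniformPartition π U V) {A : Set H} (hA : A ∈ π) :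
    hπ.center A ∈ A := by
  rw [center, dif_pos hA]
  exact (hπ.2.2.2.2 A hA).choose_spec.1

theorem smul_subset_of_mem (hπ : IsUniformPartition π U V) {A : Set H} (hA : A ∈ π) :
    hπ.center A • U ⊆ A := by
  rw [center, dif_pos hA]
  exact (hπ.2.2.2.2 A hA).choose_spec.2.1

theorem subset_smul_of_mem (hπ : IsUniformPartition π U V) {A : Set H} (hA : A ∈ π) :
    A ⊆ hπ.center A • V := by
  rw [center, dif_pos hA]
  exact (hπ.2.2.2.2 A hA).choose_spec.2.2

theorem iUnion_coe_eq_univ (hπ : IsUniformPartition π U V) : ⋃ A : π, (A : Set H) = univ := by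
  rw [← sUnion_eq_iUnion, hπ.2.2.2.1]

end Center

variable {nm : H → ℝ} {γ ρ r : ℝ}

theorem subset_smul_gball_center (hmul : ∀ x y : H, nm (x * y) ≤ γ * (nm x + nm y))
    (hγ : 0 < γ)
    (hπ : IsUniformPartition π (gball nm 1 (r / (4 * γ ^ 2)))
      (gball nm 1 (r / (4 * γ ^ 2)) * gball nm 1 (r / (4 * γ ^ 2))))
    {A : Set H} (hA : A ∈ π) : A ⊆ hπ.center A • gball nm 1 (r / (2 * γ)) := by
  have hs : 2 * γ * (r / (4 * γ ^ 2)) = r / (2 * γ) := by field_simp; ring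
  exact (hπ.subset_smul_of_mem hA).trans
    (smul_set_mono (hs ▸ gball_mul_gball_subset hmul hγ _))

theorem subset_smul_gball_of_mem_smul_gball_center (hinv : ∀ x : H, nm x⁻¹ = nm x)
    (hmul : ∀ x y : H, nm (x * y) ≤ γ * (nm x + nm y)) (hγ : 0 < γ)
    (hπ : IsUniformPartition π (gball nm 1 (r / (4 * γ ^ 2)))
      (gball nm 1 (r / (4 * γ ^ 2)) * gball nm 1 (r / (4 * γ ^ 2))))
    {A : Set H} (hA : A ∈ π) {y : H} (hy : y ∈ hπ.center A • gball nm 1 (r / (2 * γ))) :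
    A ⊆ y • gball nm 1 r := by
  have hr : 2 * γ * (r / (2 * γ)) = r := by field_simp
  simpa only [hr] using subset_smul_gball_of_mem_smul_gball hinv hmul hγ
    (hπ.subset_smul_gball_center hmul hγ hA) hy

theorem subset_smul_gball_of_inter_nonempty (hinv : ∀ x : H, nm x⁻¹ = nm x)
    (hmul : ∀ x y : H, nm (x * y) ≤ γ * (nm x + nm y)) (hγ : 0 < γ)
    (hπ : IsUniformPartition π (gball nm 1 (r / (4 * γ ^ 2)))
      (gball nm 1 (r / (4 * γ ^ 2)) * gball nm 1 (r / (4 * γ ^ 2))))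
    {A : Set H} (hA : A ∈ π) {y : H} (hAy : (A ∩ y • gball nm 1 r).Nonempty) :
    A ⊆ y • gball nm 1 (2 * γ * r) := by
  have hr : 2 * γ * (r / (2 * γ)) = r := by field_simp
  have h := _root_.subset_smul_gball_of_inter_nonempty hinv hmul hγ
    (hπ.subset_smul_gball_center hmul hγ hA) (by rwa [hr])
  rwa [hr] at h

theorem mem_smul_gball_center_of_inter_nonempty (hinv : ∀ x : H, nm x⁻¹ = nm x)
    (hmul : ∀ x y : H, nm (x * y) ≤ γ * (nm x + nm y)) (hγ : 0 < γ)
    (hπ : IsUniformPartition π (gball nm 1 (r / (4 * γ ^ 2)))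
      (gball nm 1 (r / (4 * γ ^ 2)) * gball nm 1 (r / (4 * γ ^ 2))))
    {A : Set H} (hA : A ∈ π) {y : H} (hAy : (A ∩ y • gball nm 1 r).Nonempty) :
    y ∈ hπ.center A • gball nm 1 (2 * γ * r) :=
  (mem_smul_gball_comm hinv).mp
    (hπ.subset_smul_gball_of_inter_nonempty hinv hmul hγ hA hAy (hπ.center_mem hA))

variable {E : Type*} [NormedAddCommGroup E] [MeasurableMul H] {μ : Measure H}
  [μ.IsMulLeftInvariant]

theorem partNorm_top_le_blockNorm_top
    (hvol : ∀ s : ℝ, 0 < s → μ (gball nm 1 s) = ENNReal.ofReal (s ^ ρ))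
    (hinv : ∀ x : H, nm x⁻¹ = nm x)
    (hmul : ∀ x y : H, nm (x * y) ≤ γ * (nm x + nm y)) (hγ : 0 < γ) (hr : 0 < r)
    (hπ : IsUniformPartition π (gball nm 1 (r / (4 * γ ^ 2)))
      (gball nm 1 (r / (4 * γ ^ 2)) * gball nm 1 (r / (4 * γ ^ 2))))
    (q : ℝ≥0∞) (f : H → E) :
    partNorm μ q ∞ π f ≤ blockNorm μ q ∞ (gball nm 1 r) f := by
  simp only [partNorm, blockNorm]
  refine iSup₂_le fun A hA => le_essSup_of_forall_mem ?_ fun y hy =>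
    eLpNorm_mono (norm_indicator_le_of_subset
      (hπ.subset_smul_gball_of_mem_smul_gball_center hinv hmul hγ hA hy) f)
  rw [measure_smul_gball hvol _ (by positivity : 0 < r / (2 * γ))]
  exact (rpow_pos (ofReal_pos.mpr (by positivity)) ofReal_ne_top).ne'

variable [TopologicalSpace H] [ContinuousMul H] [OpensMeasurableSpace H]

theorem encard_inter_nonempty_le
    (hvol : ∀ s : ℝ, 0 < s → μ (gball nm 1 s) = ENNReal.ofReal (s ^ ρ))
    (hcont : Continuous nm) (hinv : ∀ x : H, nm x⁻¹ = nm x)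
    (hmul : ∀ x y : H, nm (x * y) ≤ γ * (nm x + nm y)) (hγ : 0 < γ) (hr : 0 < r)
    (hπ : IsUniformPartition π (gball nm 1 (r / (4 * γ ^ 2)))
      (gball nm 1 (r / (4 * γ ^ 2)) * gball nm 1 (r / (4 * γ ^ 2)))) (y : H) :
    {A : π | ((A : Set H) ∩ y • gball nm 1 r).Nonempty}.encard ≤ ⌈(8 * γ ^ 3) ^ ρ⌉₊ := by
  set s := r / (4 * γ ^ 2)
  have hs : 0 < s := by positivity
  have : Countable π := hπ.1.to_subtype
  have hcount := encard_mul_le_measure (μ := μ) (S := fun A : π => hπ.center A • gball nm 1 s)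
    (Set.to_countable {A : π | ((A : Set H) ∩ y • gball nm 1 r).Nonempty})
    (fun A _ B _ hAB => (hπ.2.2.1 A.2 B.2 (Subtype.coe_injective.ne hAB)).mono
      (hπ.smul_subset_of_mem A.2) (hπ.smul_subset_of_mem B.2))
    (fun A _ => measurableSet_smul_gball hcont _ _)
    (fun A _ => (measure_smul_gball hvol _ hs).ge)
    (fun A hA => (hπ.smul_subset_of_mem A.2).trans
      (hπ.subset_smul_gball_of_inter_nonempty hinv hmul hγ A.2 hA))
  have hscale : ENNReal.ofReal (2 * γ * r) = ENNReal.ofReal (8 * γ ^ 3) * ENNReal.ofReal s := by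
    rw [← ENNReal.ofReal_mul (by positivity)]
    congr 1
    simp only [s]
    field_simp
    ring
  rw [measure_smul_gball hvol _ (by positivity), hscale,
    ENNReal.mul_rpow_of_ne_top ofReal_ne_top ofReal_ne_top] at hcount
  have hcard := (ENNReal.mul_le_mul_iff_left (rpow_pos (ofReal_pos.mpr hs) ofReal_ne_top).ne'
    (rpow_ne_top_of_ne_zero (ofReal_pos.mpr hs).ne' ofReal_ne_top)).mp hcount
  rw [← ENat.toENNReal_le, ENat.toENNReal_coe, ← ofReal_natCast]
  calc _ ≤ ENNReal.ofReal (8 * γ ^ 3) ^ ρ := hcard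
    _ = ENNReal.ofReal ((8 * γ ^ 3) ^ ρ) := ofReal_rpow_of_pos (by positivity)
    _ ≤ _ := ofReal_le_ofReal (Nat.le_ceil _)

theorem ofReal_rpow_mul_tsum_le_lintegral
    (hvol : ∀ s : ℝ, 0 < s → μ (gball nm 1 s) = ENNReal.ofReal (s ^ ρ))
    (hcont : Continuous nm) (hinv : ∀ x : H, nm x⁻¹ = nm x)
    (hmul : ∀ x y : H, nm (x * y) ≤ γ * (nm x + nm y)) (hγ : 0 < γ) (hr : 0 < r)
    (hπ : IsUniformPartition π (gball nm 1 (r / (4 * γ ^ 2)))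
      (gball nm 1 (r / (4 * γ ^ 2)) * gball nm 1 (r / (4 * γ ^ 2))))
    (q : ℝ≥0∞) {P : ℝ} (hP : 0 ≤ P) (f : H → E) :
    ENNReal.ofReal (r / (2 * γ)) ^ ρ * ∑' A : π, eLpNorm ((A : Set H).indicator f) q μ ^ P ≤
      ⌈(8 * γ ^ 3) ^ ρ⌉₊ * ∫⁻ y, eLpNorm ((y • gball nm 1 r).indicator f) q μ ^ P ∂μ := by
  have : Countable π := hπ.1.to_subtype
  have hcell : ∀ (A : π) {y}, y ∈ hπ.center A • gball nm 1 (r / (2 * γ)) →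
      (A : Set H) ⊆ y • gball nm 1 r :=
    fun A _ hy => hπ.subset_smul_gball_of_mem_smul_gball_center hinv hmul hγ A.2 hy
  have hcount : ∀ y, {A : π | y ∈ hπ.center A • gball nm 1 (r / (2 * γ))}.encard ≤
      ⌈(8 * γ ^ 3) ^ ρ⌉₊ := fun y =>
    (encard_le_encard fun (A : π) hA => show ((A : Set H) ∩ _).Nonempty from
      ⟨_, hπ.center_mem A.2, hcell A hA (hπ.center_mem A.2)⟩).trans
      (hπ.encard_inter_nonempty_le hvol hcont hinv hmul hγ hr y)
  have h := tsum_measure_mul_le_mul_lintegral (μ := μ)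
    (g := fun A : π => eLpNorm ((A : Set H).indicator f) q μ ^ P)
    (h := fun y => eLpNorm ((y • gball nm 1 r).indicator f) q μ ^ P)
    (fun A => measurableSet_smul_gball hcont _ _)
    (fun A y hy => ENNReal.rpow_le_rpow (eLpNorm_mono (norm_indicator_le_of_subset
      (hcell A hy) f)) hP) hcount
  simpa only [measure_smul_gball hvol _ (by positivity : 0 < r / (2 * γ)),
    ENNReal.tsum_mul_left] using h

theorem lintegral_le_ofReal_rpow_mul_tsum
    (hvol : ∀ s : ℝ, 0 < s → μ (gball nm 1 s) = ENNReal.ofReal (s ^ ρ))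
    (hcont : Continuous nm) (hinv : ∀ x : H, nm x⁻¹ = nm x)
    (hmul : ∀ x y : H, nm (x * y) ≤ γ * (nm x + nm y)) (hγ : 0 < γ) (hr : 0 < r)
    (hπ : IsUniformPartition π (gball nm 1 (r / (4 * γ ^ 2)))
      (gball nm 1 (r / (4 * γ ^ 2)) * gball nm 1 (r / (4 * γ ^ 2))))
    {q : ℝ≥0∞} (hq : 1 ≤ q) {P : ℝ} (hP : 1 ≤ P) {f : H → E}
    (hf : AEStronglyMeasurable f μ) :
    ∫⁻ y, eLpNorm ((y • gball nm 1 r).indicator f) q μ ^ P ∂μ ≤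
      (⌈(8 * γ ^ 3) ^ ρ⌉₊ : ℝ≥0∞) ^ (P - 1) * (ENNReal.ofReal (2 * γ * r) ^ ρ *
        ∑' A : π, eLpNorm ((A : Set H).indicator f) q μ ^ P) := by
  have : Countable π := hπ.1.to_subtype
  have h := lintegral_eLpNorm_indicator_rpow_le hq hP hf (A := fun A : π => (A : Set H))
    (fun A => hπ.2.1 A A.2) (fun y => hπ.iUnion_coe_eq_univ ▸ subset_univ _)
    (hπ.encard_inter_nonempty_le hvol hcont hinv hmul hγ hr)
    (fun A => measurableSet_smul_gball hcont (hπ.center A) (2 * γ * r))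
    (fun A _ => hπ.mem_smul_gball_center_of_inter_nonempty hinv hmul hγ A.2)
  simpa only [measure_smul_gball hvol _ (by positivity : 0 < 2 * γ * r),
    ENNReal.tsum_mul_left] using h

theorem blockNorm_top_le_partNorm_top
    (hvol : ∀ s : ℝ, 0 < s → μ (gball nm 1 s) = ENNReal.ofReal (s ^ ρ))
    (hcont : Continuous nm) (hinv : ∀ x : H, nm x⁻¹ = nm x)
    (hmul : ∀ x y : H, nm (x * y) ≤ γ * (nm x + nm y)) (hγ : 0 < γ) (hr : 0 < r)
    (hπ : IsUniformPartition π (gball nm 1 (r / (4 * γ ^ 2)))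
      (gball nm 1 (r / (4 * γ ^ 2)) * gball nm 1 (r / (4 * γ ^ 2))))
    {q : ℝ≥0∞} (hq : 1 ≤ q) {f : H → E} (hf : AEStronglyMeasurable f μ) :
    blockNorm μ q ∞ (gball nm 1 r) f ≤ ⌈(8 * γ ^ 3) ^ ρ⌉₊ * partNorm μ q ∞ π f := by
  simp only [partNorm, blockNorm, iSup_subtype']
  exact essSup_eLpNorm_indicator_le hq hf (A := fun A : π => (A : Set H))
    (fun A => hπ.2.1 A A.2) (fun y => hπ.iUnion_coe_eq_univ ▸ subset_univ _)
    (hπ.encard_inter_nonempty_le hvol hcont hinv hmul hγ hr)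

theorem rescaled_partNorm_le_blockNorm_le
    (hvol : ∀ s : ℝ, 0 < s → μ (gball nm 1 s) = ENNReal.ofReal (s ^ ρ))
    (hcont : Continuous nm) (hinv : ∀ x : H, nm x⁻¹ = nm x)
    (hmul : ∀ x y : H, nm (x * y) ≤ γ * (nm x + nm y)) (hγ : 0 < γ) (hr : 0 < r)
    (hπ : IsUniformPartition π (gball nm 1 (r / (4 * γ ^ 2)))
      (gball nm 1 (r / (4 * γ ^ 2)) * gball nm 1 (r / (4 * γ ^ 2))))
    {q : ℝ≥0∞} (hq : 1 ≤ q) {p : ℝ≥0∞} (hp1 : 1 ≤ p) (hp : p ≠ ∞) {f : H → E}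
    (hf : AEStronglyMeasurable f μ) :
    ((⌈(8 * γ ^ 3) ^ ρ⌉₊ : ℝ≥0∞) * ENNReal.ofReal (2 * γ) ^ ρ)⁻¹ ^ (1 / p.toReal) *
        partNorm μ q p π f ≤
      ENNReal.ofReal r ^ (-(ρ / p.toReal)) * blockNorm μ q p (gball nm 1 r) f ∧
    ENNReal.ofReal r ^ (-(ρ / p.toReal)) * blockNorm μ q p (gball nm 1 r) f ≤
      ((⌈(8 * γ ^ 3) ^ ρ⌉₊ : ℝ≥0∞) ^ (p.toReal - 1) * ENNReal.ofReal (2 * γ) ^ ρ) ^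
        (1 / p.toReal) * partNorm μ q p π f := by
  have hP : 1 ≤ p.toReal := by simpa using ENNReal.toReal_mono hp hp1
  have hr0 : ENNReal.ofReal r ≠ 0 := (ofReal_pos.mpr hr).ne'
  have h2γ : ENNReal.ofReal (2 * γ) ≠ 0 := (ofReal_pos.mpr (by positivity)).ne'
  have hrescale : ENNReal.ofReal r ^ (-(ρ / p.toReal)) =
      (ENNReal.ofReal r ^ ρ)⁻¹ ^ (1 / p.toReal) := by
    rw [← ENNReal.rpow_neg, ← ENNReal.rpow_mul]
    ring_nf
  have hinner : ENNReal.ofReal (r / (2 * γ)) ^ ρ =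
      ENNReal.ofReal r ^ ρ * (ENNReal.ofReal (2 * γ) ^ ρ)⁻¹ := by
    rw [ofReal_div_of_pos (by positivity), div_eq_mul_inv,
      ENNReal.mul_rpow_of_ne_top ofReal_ne_top (inv_ne_top.mpr h2γ), ENNReal.inv_rpow]
  have houter : ENNReal.ofReal (2 * γ * r) ^ ρ =
      ENNReal.ofReal (2 * γ) ^ ρ * ENNReal.ofReal r ^ ρ := by
    rw [ofReal_mul (by positivity), ENNReal.mul_rpow_of_ne_top ofReal_ne_top ofReal_ne_top]
  simp only [partNorm, blockNorm, if_neg hp, hrescale]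
  refine ENNReal.rpow_one_div_bounds_of_scaled_bounds (by linarith)
    (rpow_pos (ofReal_pos.mpr hr) ofReal_ne_top).ne' (rpow_ne_top_of_ne_zero hr0 ofReal_ne_top)
    (Nat.ceil_pos.mpr (by positivity)).ne' ?_ ?_
  · simpa only [hinner] using
      hπ.ofReal_rpow_mul_tsum_le_lintegral hvol hcont hinv hmul hγ hr q (by linarith) f
  · simpa only [houter] using
      hπ.lintegral_le_ofReal_rpow_mul_tsum hvol hcont hinv hmul hγ hr hq hP hf

end IsUniformPartition

theorem statement4_general
    (μ : Measure G) [μ.IsHaarMeasure]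
    (nm : G → ℝ) (γ ρ : ℝ)
    (hnm_cont : Continuous nm)
    (hnm_inv : ∀ x : G, nm x⁻¹ = nm x)
    (hγ : 1 ≤ γ)
    (hnm_mul : ∀ x y : G, nm (x * y) ≤ γ * (nm x + nm y))
    (hvol : ∀ r : ℝ, 0 < r → μ (gball nm 1 r) = ENNReal.ofReal (r ^ ρ))
    (πr : ℝ → Set (Set G))
    (hπr : ∀ r : ℝ, 0 < r → IsUniformPartition (πr r)
      (gball nm 1 (r / (4 * γ ^ 2)))
      (gball nm 1 (r / (4 * γ ^ 2)) * gball nm 1 (r / (4 * γ ^ 2))))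
   (q p : ℝ≥0∞) (hq1 : 1 ≤ q) (hp1 : 1 ≤ p) :
    ∃ C₁ C₂ : ℝ≥0, 0 < C₁ ∧ 0 < C₂ ∧
      ∀ r : ℝ, 0 < r → ∀ f : G → ℂ, AEStronglyMeasurable f μ →
        blockNorm μ q p (gball nm 1 1) f < ∞ →
        (C₁ : ℝ≥0∞) * partNorm μ q p (πr r) f ≤
            (if p = ∞ then 1 else ENNReal.ofReal r ^ (-(ρ / p.toReal))) *
              blockNorm μ q p (gball nm 1 r) f ∧
          (if p = ∞ then 1 else ENNReal.ofReal r ^ (-(ρ / p.toReal))) *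
              blockNorm μ q p (gball nm 1 r) f ≤ (C₂ : ℝ≥0∞) * partNorm μ q p (πr r) f := by
  have hγ0 : 0 < γ := by linarith
  have hN : (⌈(8 * γ ^ 3) ^ ρ⌉₊ : ℝ≥0∞) ≠ 0 := by
    exact_mod_cast (Nat.ceil_pos.mpr (by positivity)).ne'
  have hκ0 : ENNReal.ofReal (2 * γ) ^ ρ ≠ 0 :=
    (rpow_pos (ofReal_pos.mpr (by positivity)) ofReal_ne_top).ne'
  have hκtop : ENNReal.ofReal (2 * γ) ^ ρ ≠ ⊤ :=
    rpow_ne_top_of_ne_zero (ofReal_pos.mpr (by positivity)).ne' ofReal_ne_top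
  by_cases hp : p = ∞
  · refine ⟨1, ⌈(8 * γ ^ 3) ^ ρ⌉₊, one_pos,
      Nat.cast_pos.mpr (Nat.ceil_pos.mpr (by positivity)), fun r hr f hf _ => ?_⟩
    rw [if_pos hp, ENNReal.coe_one, ENNReal.coe_natCast, one_mul, one_mul]
    subst hp
    exact ⟨(hπr r hr).partNorm_top_le_blockNorm_top hvol hnm_inv hnm_mul hγ0 hr q f,
      (hπr r hr).blockNorm_top_le_partNorm_top hvol hnm_cont hnm_inv hnm_mul hγ0 hr hq1 hf⟩
  · obtain ⟨C₁, hC₁, hC₁_eq⟩ := ENNReal.exists_pos_coe_eq_rpow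
      (ENNReal.inv_ne_zero.mpr (mul_ne_top (natCast_ne_top _) hκtop))
      (inv_ne_top.mpr (mul_ne_zero hN hκ0)) (1 / p.toReal)
    obtain ⟨C₂, hC₂, hC₂_eq⟩ := ENNReal.exists_pos_coe_eq_rpow
      (mul_ne_zero (rpow_pos (pos_iff_ne_zero.mpr hN) (natCast_ne_top _)).ne' hκ0)
      (mul_ne_top (rpow_ne_top_of_ne_zero hN (natCast_ne_top _)) hκtop) (1 / p.toReal)
    refine ⟨C₁, C₂, hC₁, hC₂, fun r hr f hf _ => ?_⟩
    rw [if_neg hp, hC₁_eq, hC₂_eq]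
    exact (hπr r hr).rescaled_partNorm_le_blockNorm_le hvol hnm_cont hnm_inv hnm_mul hγ0 hr hq1
      hp1 hp hf

theorem statement4
    (μ : Measure G) [μ.IsHaarMeasure]
    (nm : G → ℝ) (γ ρ : ℝ)
    (hnm_cont : Continuous nm)
    (hnm_nonneg : ∀ x : G, 0 ≤ nm x)
    (hnm_zero : ∀ x : G, nm x = 0 ↔ x = 1)
    (hnm_inv : ∀ x : G, nm x⁻¹ = nm x)
    (hγ : 1 ≤ γ)
    (hnm_mul : ∀ x y : G, nm (x * y) ≤ γ * (nm x + nm y))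
    (hball_cpt : ∀ (x : G) (r : ℝ), 0 < r → IsCompact (closure (gball nm x r)))
    (hρ : 0 < ρ)
    (hvol : ∀ r : ℝ, 0 < r → μ (gball nm 1 r) = ENNReal.ofReal (r ^ ρ))
    (πr : ℝ → Set (Set G))
    (hπr : ∀ r : ℝ, 0 < r → IsUniformPartition (πr r)
      (gball nm 1 (r / (4 * γ ^ 2)))
      (gball nm 1 (r / (4 * γ ^ 2)) * gball nm 1 (r / (4 * γ ^ 2))))
   (q p : ℝ≥0∞) (hq1 : 1 ≤ q) (hp1 : 1 ≤ p) :
    ∃ C₁ C₂ : ℝ≥0, 0 < C₁ ∧ 0 < C₂ ∧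
      ∀ r : ℝ, 0 < r → ∀ f : G → ℂ, AEStronglyMeasurable f μ →
        blockNorm μ q p (gball nm 1 1) f < ∞ →
        (C₁ : ℝ≥0∞) * partNorm μ q p (πr r) f ≤
            (if p = ∞ then 1 else ENNReal.ofReal r ^ (-(ρ / p.toReal))) *
              blockNorm μ q p (gball nm 1 r) f ∧
          (if p = ∞ then 1 else ENNReal.ofReal r ^ (-(ρ / p.toReal))) *
              blockNorm μ q p (gball nm 1 r) f ≤ (C₂ : ℝ≥0∞) * partNorm μ q p (πr r) f :=
  statement4_general μ nm γ ρ hnm_cont hnm_inv hγ hnm_mul hvol πr hπr q p hq1 hp1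
end

section
/- Let α, q, p ∈ [1,∞] with α < q. Then (L^q,L^p)^α(G) = {O}, where O is the class of functions equal to 0 λ-almost everywhere; that is, every measurable f with ‖f‖_{q,p,α} < ∞ vanishes λ-a.e. -/
/-!
If `f` is not null, there are `ε > 0` and a measurable set `K` of positive measure inside some
ball `B(e, R)` with `‖f‖ ≥ ε` a.e. on `K`. For `r ≥ R`, the pieces of `π_r` that meet `K` have
pairwise disjoint inner balls `x_A B(e, r/4γ²)`, all contained in `B(e, 2γ²r)`; comparing volumes,
`μ K ≤ (8γ⁴)^ρ · sup_A μ(A ∩ K)`, so some piece carries a fixed fraction of `μ K`. Hence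
`‖f‖^{π_r}_{q,p}` is bounded below independently of `r`, while the weight
`λ(B(e,r))^{1/α - 1/q} = r^{ρ(1/α - 1/q)}` tends to infinity.
-/

open MeasureTheory ENNReal NNReal Set Filter Topology Pointwise

variable {G : Type*} [Group G] [TopologicalSpace G] [IsTopologicalGroup G]
  [T2Space G] [LocallyCompactSpace G] [SigmaCompactSpace G]
  [MeasurableSpace G] [BorelSpace G]

section Measure

variable {α : Type*} [MeasurableSpace α] {μ : Measure α}

theorem exists_measurableSet_subset_le_enorm {E : Type*} [NormedAddCommGroup E] {f : α → E}
    (hf : AEStronglyMeasurable f μ) (hf0 : ¬f =ᵐ[μ] 0) {B : ℕ → Set α}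
    (hBm : ∀ n, MeasurableSet (B n)) (hB : ⋃ n, B n = univ) :
    ∃ ε ≠ 0, ∃ n, ∃ K ⊆ B n, MeasurableSet K ∧ μ K ≠ 0 ∧
      ∀ᵐ x ∂μ, x ∈ K → ε ≤ ‖f x‖ₑ := by
  obtain ⟨g, hg, hfg⟩ := hf
  have hg0 : μ {x | g x ≠ 0} ≠ 0 := fun h =>
    hf0 (hfg.trans (ae_iff.mpr (by simpa using h)))
  have hcover : {x | g x ≠ 0} ⊆ ⋃ (k : ℕ) (n : ℕ), {x | (k : ℝ≥0∞)⁻¹ < ‖g x‖ₑ} ∩ B n := by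
    intro x hx
    obtain ⟨k, hk⟩ := ENNReal.exists_inv_nat_lt (enorm_ne_zero.mpr hx)
    obtain ⟨n, hn⟩ := iUnion_eq_univ_iff.mp hB x
    exact mem_iUnion₂.mpr ⟨k, n, hk, hn⟩
  obtain ⟨k, hk⟩ := exists_measure_pos_of_not_measure_iUnion_null fun h =>
    hg0 (measure_mono_null hcover h)
  obtain ⟨n, hn⟩ := exists_measure_pos_of_not_measure_iUnion_null hk.ne'
  refine ⟨(k : ℝ≥0∞)⁻¹, by simp, n, _, inter_subset_right,
    (measurableSet_lt measurable_const hg.enorm).inter (hBm n), hn.ne', ?_⟩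
  filter_upwards [hfg] with x hx hxK
  exact hx ▸ hxK.1.le

theorem mul_rpow_le_eLpNorm_indicator {E : Type*} [NormedAddCommGroup E] {f : α → E}
    {s : Set α} (hs : MeasurableSet s) (hμs : μ s ≠ 0) {q : ℝ≥0∞} (hq : q ≠ 0) {ε : ℝ≥0∞}
    (hf : ∀ᵐ x ∂μ, x ∈ s → ε ≤ ‖f x‖ₑ) :
    ε * μ s ^ q⁻¹.toReal ≤ eLpNorm (s.indicator f) q μ :=
  calc ε * μ s ^ q⁻¹.toReal = eLpNorm (s.indicator fun _ => ε) q μ := by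
        rw [eLpNorm_indicator_const' hs hμs hq, enorm_eq_self, toReal_inv, one_div]
    _ ≤ eLpNorm (s.indicator f) q μ := by
        refine eLpNorm_mono_enorm_ae ?_
        filter_upwards [hf] with x hx
        by_cases h : x ∈ s <;> simp [h, hx]

theorem measure_mul_le_iSup_measure_inter_mul {π : Set (Set α)} (hπ : π.Countable)
    {K : Set α} (hK : K ⊆ ⋃₀ π) {D : Set α → Set α} (hDd : π.PairwiseDisjoint D)
    (hDm : ∀ A ∈ π, MeasurableSet (D A)) {m : ℝ≥0∞} (hD : ∀ A ∈ π, μ (D A) = m)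
    {B : Set α} (hB : MeasurableSet B) (hDB : ∀ A ∈ π, (A ∩ K).Nonempty → D A ⊆ B) :
    μ K * m ≤ (⨆ A ∈ π, μ (A ∩ K)) * μ B := by
  set M := ⨆ A ∈ π, μ (A ∩ K)
  have hterm : ∀ A ∈ π, μ (A ∩ K) * m ≤ M * μ (D A ∩ B) := by
    intro A hA
    rcases (A ∩ K).eq_empty_or_nonempty with h | h
    · simp [h]
    · rw [inter_eq_left.mpr (hDB A hA h), hD A hA]
      gcongr
      exact le_iSup₂ (f := fun A _ => μ (A ∩ K)) A hA
  have hKsum : μ K ≤ ∑' A : π, μ (A ∩ K) :=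
    calc μ K = μ (⋃ A ∈ π, A ∩ K) := by
          rw [← iUnion₂_inter, ← sUnion_eq_biUnion, inter_eq_right.mpr hK]
      _ ≤ _ := measure_biUnion_le μ hπ _
  calc μ K * m ≤ (∑' A : π, μ (A ∩ K)) * m := by gcongr
    _ = ∑' A : π, μ (A ∩ K) * m := ENNReal.tsum_mul_right.symm
    _ ≤ ∑' A : π, M * μ (D A ∩ B) := ENNReal.tsum_le_tsum fun A => hterm A A.2
    _ = M * μ (⋃ A ∈ π, D A ∩ B) := by
        rw [ENNReal.tsum_mul_left, measure_biUnion hπ (hDd.mono_on fun _ _ => inter_subset_left)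
          fun A hA => (hDm A hA).inter hB]
    _ ≤ M * μ B := by
        gcongr
        exact iUnion₂_subset fun _ _ => inter_subset_right

end Measure

section QuasiNorm

variable {H : Type*} [Group H] {nm : H → ℝ} {γ : ℝ}

theorem mem_gball_one {y : H} {s : ℝ} : y ∈ gball nm 1 s ↔ nm y < s := by
  simp [gball]

theorem isOpen_gball [TopologicalSpace H] [ContinuousMul H] (hnm : Continuous nm) (x : H)
    (s : ℝ) : IsOpen (gball nm x s) :=
  isOpen_lt (hnm.comp (continuous_const.mul continuous_id)) continuous_const

theorem smul_gball_subset_gball_of_mem (hγ : 1 ≤ γ) (hnm_inv : ∀ x : H, nm x⁻¹ = nm x)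
    (hnm_mul : ∀ x y : H, nm (x * y) ≤ γ * (nm x + nm y)) {x k : H} {R t : ℝ} (ht : 0 ≤ t)
    (hk : k ∈ gball nm 1 R) (hkx : k ∈ x • (gball nm 1 t * gball nm 1 t))
    (hR : R ≤ 4 * γ ^ 2 * t) :
    x • gball nm 1 t ⊆ gball nm 1 (8 * γ ^ 4 * t) := by
  have hmul_lt {a b : H} {s s' : ℝ} (ha : nm a < s) (hb : nm b < s') :
      nm (a * b) < γ * (s + s') :=
    (hnm_mul a b).trans_lt (by gcongr)
  obtain ⟨_, ⟨u, hu, v, hv, rfl⟩, rfl⟩ := hkx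
  rintro _ ⟨z, hz, rfl⟩
  rw [mem_gball_one] at hk hu hv hz ⊢
  have huv : nm (u * v)⁻¹ < γ * (t + t) := hnm_inv (u * v) ▸ hmul_lt hu hv
  have hz_eq : x • z = x • (u * v) * ((u * v)⁻¹ * z) := by
    simp only [smul_eq_mul]
    group
  calc nm (x • z) < γ * (R + γ * (γ * (t + t) + t)) := hz_eq ▸ hmul_lt hk (hmul_lt huv hz)
    _ ≤ γ * (4 * γ ^ 2 * t + γ * (γ * (t + t) + t)) := by gcongr
    _ = 6 * γ ^ 3 * t + γ ^ 2 * t := by ring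
    _ ≤ 8 * γ ^ 4 * t := by
        have hγ3 : γ ^ 3 ≤ γ ^ 4 := pow_le_pow_right₀ hγ (by norm_num)
        have hγ2 : γ ^ 2 ≤ γ ^ 4 := pow_le_pow_right₀ hγ (by norm_num)
        nlinarith

variable [MeasurableSpace H]

theorem tendsto_measure_gball_rpow_atTop {μ : Measure H} {ρ : ℝ}
    (hvol : ∀ r : ℝ, 0 < r → μ (gball nm 1 r) = ENNReal.ofReal (r ^ ρ)) (hρ : 0 < ρ)
    {δ : ℝ} (hδ : 0 < δ) : Tendsto (fun r => μ (gball nm 1 r) ^ δ) atTop (𝓝 ∞) := by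
  have h : (fun r => ENNReal.ofReal (r ^ (ρ * δ))) =ᶠ[atTop] fun r => μ (gball nm 1 r) ^ δ := by
    filter_upwards [eventually_gt_atTop 0] with r hr
    rw [hvol r hr, ENNReal.ofReal_rpow_of_nonneg (by positivity) hδ.le, ← Real.rpow_mul hr.le]
  exact (ENNReal.tendsto_ofReal_atTop.comp (tendsto_rpow_atTop (mul_pos hρ hδ))).congr' h

theorem alphaNorm_eq_top_of_eventually_le_partNorm {E : Type*} [NormedAddCommGroup E]
    {μ : Measure H} {ρ : ℝ} (hvol : ∀ r : ℝ, 0 < r → μ (gball nm 1 r) = ENNReal.ofReal (r ^ ρ))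
    (hρ : 0 < ρ) {q p α : ℝ≥0∞} (hα : α ≠ 0) (hαq : α < q) {πr : ℝ → Set (Set H)}
    {f : H → E} {κ : ℝ≥0∞} (hκ : κ ≠ 0) (hf : ∀ᶠ r in atTop, κ ≤ partNorm μ q p (πr r) f) :
    alphaNorm μ nm πr q p α f = ∞ := by
  have hδ : 0 < α⁻¹.toReal - q⁻¹.toReal :=
    sub_pos.mpr <| toReal_strict_mono (inv_ne_top.mpr hα) (ENNReal.inv_lt_inv.mpr hαq)
  have hlim := ENNReal.Tendsto.mul_const (tendsto_measure_gball_rpow_atTop hvol hρ hδ)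
    (.inl top_ne_zero) (b := κ)
  rw [top_mul hκ] at hlim
  refine top_le_iff.mp (le_of_tendsto hlim ?_)
  filter_upwards [hf, eventually_gt_atTop 0] with r hr hr0
  calc μ (gball nm 1 r) ^ (α⁻¹.toReal - q⁻¹.toReal) * κ
      ≤ μ (gball nm 1 r) ^ (α⁻¹.toReal - q⁻¹.toReal) * partNorm μ q p (πr r) f := by gcongr
    _ ≤ alphaNorm μ nm πr q p α f := le_iSup₂ (f := fun s (_ : 0 < s) =>
        μ (gball nm 1 s) ^ (α⁻¹.toReal - q⁻¹.toReal) * partNorm μ q p (πr s) f) r hr0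

theorem measure_le_mul_iSup_measure_inter [TopologicalSpace H] [ContinuousMul H]
    [BorelSpace H] {μ : Measure H} [μ.IsMulLeftInvariant] {ρ : ℝ}
    (hvol : ∀ r : ℝ, 0 < r → μ (gball nm 1 r) = ENNReal.ofReal (r ^ ρ))
    (hnm_cont : Continuous nm) (hnm_inv : ∀ x : H, nm x⁻¹ = nm x)
    (hnm_mul : ∀ x y : H, nm (x * y) ≤ γ * (nm x + nm y)) (hγ : 1 ≤ γ)
    {π : Set (Set H)} {t : ℝ} (ht : 0 < t)
    (hπ : IsUniformPartition π (gball nm 1 t) (gball nm 1 t * gball nm 1 t))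
    {K : Set H} {R : ℝ} (hK : K ⊆ gball nm 1 R) (hR : R ≤ 4 * γ ^ 2 * t) :
    μ K ≤ ENNReal.ofReal ((8 * γ ^ 4) ^ ρ) * ⨆ A ∈ π, μ (A ∩ K) := by
  obtain ⟨hπc, -, hπd, hπu, hπx⟩ := hπ
  choose! x _ hxU hxV using hπx
  have hm0 : ENNReal.ofReal (t ^ ρ) ≠ 0 := (ENNReal.ofReal_pos.mpr (by positivity)).ne'
  have hball : μ (gball nm 1 (8 * γ ^ 4 * t)) =
      ENNReal.ofReal ((8 * γ ^ 4) ^ ρ) * ENNReal.ofReal (t ^ ρ) := by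
    rw [hvol _ (by positivity), Real.mul_rpow (by positivity) ht.le,
      ENNReal.ofReal_mul (by positivity)]
  have hpack := measure_mul_le_iSup_measure_inter_mul (μ := μ) hπc (hπu ▸ subset_univ K)
    (D := fun A => x A • gball nm 1 t) (hπd.mono_on hxU)
    (fun A _ => (isOpen_gball hnm_cont 1 t).measurableSet.const_smul (x A))
    (fun A _ => by rw [measure_smul, hvol t ht]) (isOpen_gball hnm_cont 1 _).measurableSet
    fun A hA ⟨k, hkA, hkK⟩ =>
      smul_gball_subset_gball_of_mem hγ hnm_inv hnm_mul ht.le (hK hkK) (hxV A hA hkA) hR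
  rwa [hball, ← mul_assoc, mul_comm (⨆ A ∈ π, μ (A ∩ K)),
    ENNReal.mul_le_mul_iff_left hm0 ENNReal.ofReal_ne_top] at hpack

end QuasiNorm

section PartNorm

variable {H : Type*} [MeasurableSpace H] {E : Type*} [NormedAddCommGroup E]

theorem eLpNorm_indicator_le_partNorm {μ : Measure H} {q p : ℝ≥0∞} (hp : p ≠ 0)
    {π : Set (Set H)} {A : Set H} (hA : A ∈ π) (f : H → E) :
    eLpNorm (A.indicator f) q μ ≤ partNorm μ q p π f := by
  unfold partNorm
  split_ifs with hptop
  · exact le_iSup₂ (f := fun B (_ : B ∈ π) => eLpNorm (B.indicator f) q μ) A hA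
  · have hp' : p.toReal ≠ 0 := (ENNReal.toReal_pos hp hptop).ne'
    calc eLpNorm (A.indicator f) q μ
        = (eLpNorm (A.indicator f) q μ ^ p.toReal) ^ (1 / p.toReal) := by
          rw [one_div, ENNReal.rpow_rpow_inv hp']
      _ ≤ _ := by
          gcongr
          exact ENNReal.le_tsum (⟨A, hA⟩ : π)

variable [Group H] [TopologicalSpace H] [ContinuousMul H] [BorelSpace H]
  {μ : Measure H} [μ.IsMulLeftInvariant] {nm : H → ℝ} {γ ρ : ℝ}

theorem mul_rpow_le_partNorm (hvol : ∀ r : ℝ, 0 < r → μ (gball nm 1 r) = ENNReal.ofReal (r ^ ρ))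
    (hnm_cont : Continuous nm) (hnm_inv : ∀ x : H, nm x⁻¹ = nm x)
    (hnm_mul : ∀ x y : H, nm (x * y) ≤ γ * (nm x + nm y)) (hγ : 1 ≤ γ)
    {q p : ℝ≥0∞} (hq : q ≠ 0) (hp : p ≠ 0) {π : Set (Set H)} {t : ℝ} (ht : 0 < t)
    (hπ : IsUniformPartition π (gball nm 1 t) (gball nm 1 t * gball nm 1 t))
    {K : Set H} {R : ℝ} (hKm : MeasurableSet K) (hK : K ⊆ gball nm 1 R)
    (hR : R ≤ 4 * γ ^ 2 * t) (hK0 : μ K ≠ 0) (hKtop : μ K ≠ ∞) {f : H → E} {ε : ℝ≥0∞}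
    (hf : ∀ᵐ x ∂μ, x ∈ K → ε ≤ ‖f x‖ₑ) :
    ε * (μ K / ENNReal.ofReal ((8 * γ ^ 4) ^ ρ) / 2) ^ q⁻¹.toReal ≤ partNorm μ q p π f := by
  set W := ENNReal.ofReal ((8 * γ ^ 4) ^ ρ)
  have hW0 : W ≠ 0 := (ENNReal.ofReal_pos.mpr (by positivity)).ne'
  have hheavy : μ K / W / 2 < ⨆ A ∈ π, μ (A ∩ K) :=
    calc μ K / W / 2 < μ K / W :=
          ENNReal.half_lt_self (ENNReal.div_ne_zero.mpr ⟨hK0, ENNReal.ofReal_ne_top⟩)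
            (ENNReal.div_ne_top hKtop hW0)
      _ ≤ ⨆ A ∈ π, μ (A ∩ K) := ENNReal.div_le_of_le_mul' <|
          measure_le_mul_iSup_measure_inter hvol hnm_cont hnm_inv hnm_mul hγ ht hπ hK hR
  obtain ⟨A, hA, hAK⟩ := lt_biSup_iff.mp hheavy
  calc ε * (μ K / W / 2) ^ q⁻¹.toReal ≤ ε * μ (A ∩ K) ^ q⁻¹.toReal := by gcongr
    _ ≤ eLpNorm ((A ∩ K).indicator f) q μ :=
        mul_rpow_le_eLpNorm_indicator ((hπ.2.1 A hA).inter hKm) (pos_of_gt hAK).ne' hq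
          (hf.mono fun x hx hxAK => hx hxAK.2)
    _ ≤ eLpNorm (A.indicator f) q μ := by
        rw [inter_comm, ← indicator_indicator]
        exact eLpNorm_indicator_le _
    _ ≤ partNorm μ q p π f := eLpNorm_indicator_le_partNorm hp hA f

end PartNorm

theorem statement7_general
    (μ : Measure G) [μ.IsHaarMeasure]
    (nm : G → ℝ) (γ ρ : ℝ)
    (hnm_cont : Continuous nm)
    (hnm_inv : ∀ x : G, nm x⁻¹ = nm x)
    (hγ : 1 ≤ γ)
    (hnm_mul : ∀ x y : G, nm (x * y) ≤ γ * (nm x + nm y))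
    (hρ : 0 < ρ)
    (hvol : ∀ r : ℝ, 0 < r → μ (gball nm 1 r) = ENNReal.ofReal (r ^ ρ))
    (πr : ℝ → Set (Set G))
    (hπr : ∀ r : ℝ, 0 < r → IsUniformPartition (πr r)
      (gball nm 1 (r / (4 * γ ^ 2)))
      (gball nm 1 (r / (4 * γ ^ 2)) * gball nm 1 (r / (4 * γ ^ 2))))
   (q p α : ℝ≥0∞) (hα1 : 1 ≤ α) (hp1 : 1 ≤ p) (hαq : α < q) :
    ∀ f : G → ℂ, AEStronglyMeasurable f μ →
      alphaNorm μ nm πr q p α f < ∞ → f =ᵐ[μ] 0 := by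
  intro f hf hfin
  by_contra hf0
  obtain ⟨ε, hε, n, K, hKR, hKm, hK0, hfK⟩ := exists_measurableSet_subset_le_enorm hf hf0
    (fun n : ℕ => (isOpen_gball hnm_cont 1 (n + 1)).measurableSet)
    (iUnion_eq_univ_iff.mpr fun x => (exists_nat_gt (nm x)).imp fun n hn =>
      mem_gball_one.mpr (hn.trans (lt_add_one _)))
  have hKtop : μ K ≠ ∞ :=
    ne_top_of_le_ne_top (by rw [hvol _ (by positivity)]; exact ofReal_ne_top) (measure_mono hKR)
  have hκ : ε * (μ K / ENNReal.ofReal ((8 * γ ^ 4) ^ ρ) / 2) ^ q⁻¹.toReal ≠ 0 :=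
    mul_ne_zero hε (ENNReal.rpow_pos_of_nonneg (ENNReal.half_pos (ENNReal.div_ne_zero.mpr
      ⟨hK0, ofReal_ne_top⟩)) toReal_nonneg).ne'
  refine hfin.ne <| alphaNorm_eq_top_of_eventually_le_partNorm hvol hρ
    (zero_lt_one.trans_le hα1).ne' hαq hκ ?_
  filter_upwards [eventually_ge_atTop ((n : ℝ) + 1)] with r hr
  have hr0 : 0 < r := lt_of_lt_of_le (by positivity) hr
  exact mul_rpow_le_partNorm hvol hnm_cont hnm_inv hnm_mul hγ (zero_le.trans_lt hαq).ne'
    (zero_lt_one.trans_le hp1).ne' (by positivity) (hπr r hr0) hKm hKR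
    (by field_simp; exact hr) hK0 hKtop hfK

theorem statement7
    (μ : Measure G) [μ.IsHaarMeasure]
    (nm : G → ℝ) (γ ρ : ℝ)
    (hnm_cont : Continuous nm)
    (hnm_nonneg : ∀ x : G, 0 ≤ nm x)
    (hnm_zero : ∀ x : G, nm x = 0 ↔ x = 1)
    (hnm_inv : ∀ x : G, nm x⁻¹ = nm x)
    (hγ : 1 ≤ γ)
    (hnm_mul : ∀ x y : G, nm (x * y) ≤ γ * (nm x + nm y))
    (hball_cpt : ∀ (x : G) (r : ℝ), 0 < r → IsCompact (closure (gball nm x r)))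
    (hρ : 0 < ρ)
    (hvol : ∀ r : ℝ, 0 < r → μ (gball nm 1 r) = ENNReal.ofReal (r ^ ρ))
    (πr : ℝ → Set (Set G))
    (hπr : ∀ r : ℝ, 0 < r → IsUniformPartition (πr r)
      (gball nm 1 (r / (4 * γ ^ 2)))
      (gball nm 1 (r / (4 * γ ^ 2)) * gball nm 1 (r / (4 * γ ^ 2))))
   (q p α : ℝ≥0∞) (hα1 : 1 ≤ α) (hp1 : 1 ≤ p) (hαq : α < q) :
    ∀ f : G → ℂ, AEStronglyMeasurable f μ →
      alphaNorm μ nm πr q p α f < ∞ → f =ᵐ[μ] 0 :=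
  statement7_general μ nm γ ρ hnm_cont hnm_inv hγ hnm_mul hρ hvol πr hπr q p α hα1 hp1 hαq
end
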